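/- arXiv:math/0610548 — 8 statements merged into one kernel-verified Lean document; each statement's English description precedes it below -/
import Mathlib

section
/- Let ι : P → ℕ^r be an injective homomorphism of commutative monoids such that the image ι(P) is close to ℕ^r, and let e : ℕ^r → ℕ^r be a monoid endomorphism with e ∘ ι = ι. Then e is an automorphism of ℕ^r. -/
/-- If `ι : P → ℕ^r` is an injective monoid homomorphism with image
close to `ℕ^r` and `e : ℕ^r → ℕ^r` is an endomorphism with `e ∘ ι = ι`,
then `e` is an automorphism (i.e. bijective). -/
theorem stmt2 {P : Type*} [AddCommMonoid P] {r : ℕ}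
    (ι : P →+ (Fin r → ℕ)) (hinj : Function.Injective ι)
    (hclose : ∀ x : Fin r → ℕ, ∃ n : ℕ, 0 < n ∧ ∃ p : P, n • x = ι p)
    (e : (Fin r → ℕ) →+ (Fin r → ℕ)) (he : ∀ p : P, e (ι p) = ι p) :
    Function.Bijective e := by
  have hid : ∀ x, e x = x := by
    intro x
    obtain ⟨n, hn, p, hp⟩ := hclose x
    have h : n • e x = n • x := by
      rw [← map_nsmul, hp, he, ← hp]
    funext i
    have := congrFun h i
    simp only [Pi.smul_apply, smul_eq_mul] at this
    exact Nat.eq_of_mul_eq_mul_left hn this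
  constructor
  · intro a b hab; rwa [hid, hid] at hab
  · intro x; exact ⟨x, hid x⟩
end

section
/- Let σ be a full-dimensional simplicial rational cone in N_ℝ with N ≅ ℤ^d and M = Hom(N, ℤ). Set P = σ^∨ ∩ M and F = { h ∈ M ⊗ ℚ : ⟨h, s⟩ ∈ ℤ_{≥0} for all s in the submonoid S generated by the first lattice points of the rays of σ }. Then the natural inclusion P ⊆ F realizes P as a submonoid of F that is close to F. -/
/-! The pairing `s ↦ ⟨h, s⟩` is additive, so `h ∈ F` as soon as `⟨h, ζ i⟩ ∈ ℕ` for every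
generator; for integral `h ∈ P` this is nonnegativity. Conversely, multiplying `h ∈ F` by a
common denominator of its coordinates makes it integral without changing the signs of its
pairings with the `ζ i`. -/

open Finset

section Pairing

variable {ι : Type*} [Fintype ι]

theorem exists_natCast_eq_sum_mul_of_mem_closure {S : Set (ι → ℤ)} {h : ι → ℚ}
    (hS : ∀ s ∈ S, ∃ k : ℕ, ∑ j, h j * (s j : ℚ) = k) {s : ι → ℤ}
    (hs : s ∈ AddSubmonoid.closure S) : ∃ k : ℕ, ∑ j, h j * (s j : ℚ) = k := by
  induction hs using AddSubmonoid.closure_induction with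
  | mem s hs => exact hS s hs
  | zero => exact ⟨0, by simp⟩
  | add s t _ _ hs ht =>
    obtain ⟨k, hk⟩ := hs
    obtain ⟨l, hl⟩ := ht
    refine ⟨k + l, ?_⟩
    simp only [Pi.add_apply, Int.cast_add, mul_add, sum_add_distrib, hk, hl, Nat.cast_add]

theorem exists_natCast_eq_sum_intCast_mul_of_nonneg (m s : ι → ℤ)
    (hnonneg : 0 ≤ ∑ j, (m j : ℚ) * s j) : ∃ k : ℕ, ∑ j, (m j : ℚ) * s j = k := by
  have hcast : ∑ j, (m j : ℚ) * s j = ((∑ j, m j * s j : ℤ) : ℚ) := by push_cast; rfl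
  rw [hcast] at hnonneg ⊢
  obtain ⟨k, hk⟩ := Int.eq_ofNat_of_zero_le (by exact_mod_cast hnonneg)
  exact ⟨k, by rw [hk]; norm_cast⟩

theorem exists_pos_nsmul_eq_intCast (h : ι → ℚ) :
    ∃ n : ℕ, 0 < n ∧ ∃ m : ι → ℤ, ∀ j, (n • h) j = m j := by
  classical
  refine ⟨∏ j, (h j).den, prod_pos fun j _ => (h j).pos,
    fun j => (∏ k ∈ univ.erase j, (h k).den : ℕ) * (h j).num, fun j => ?_⟩
  rw [Pi.smul_apply, nsmul_eq_mul, ← mul_prod_erase univ _ (mem_univ j)]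
  push_cast
  rw [mul_comm ((h j).den : ℚ), mul_assoc, Rat.den_mul_eq_num]

end Pairing

theorem stmt5_general {d : ℕ} (ζ : Fin d → (Fin d → ℤ))
    (P F : AddSubmonoid (Fin d → ℚ))
    (hP : ∀ h : Fin d → ℚ, h ∈ P ↔
      ((∃ m : Fin d → ℤ, ∀ j, h j = (m j : ℚ)) ∧ ∀ i, 0 ≤ ∑ j, h j * (ζ i j : ℚ)))
    (hF : ∀ h : Fin d → ℚ, h ∈ F ↔
      ∀ s ∈ AddSubmonoid.closure (Set.range ζ),
        ∃ k : ℕ, ∑ j, h j * (s j : ℚ) = (k : ℚ)) :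
    P ≤ F ∧ ∀ h ∈ F, ∃ n : ℕ, 0 < n ∧ n • h ∈ P := by
  constructor
  · intro h hh
    obtain ⟨⟨m, hm⟩, hnonneg⟩ := (hP h).1 hh
    obtain rfl : h = fun j => (m j : ℚ) := funext hm
    refine (hF _).2 fun s hs => exists_natCast_eq_sum_mul_of_mem_closure ?_ hs
    rintro _ ⟨i, rfl⟩
    exact exists_natCast_eq_sum_intCast_mul_of_nonneg m (ζ i) (hnonneg i)
  · intro h hh
    obtain ⟨n, hn, m, hm⟩ := exists_pos_nsmul_eq_intCast h
    refine ⟨n, hn, (hP _).2 ⟨⟨m, hm⟩, fun i => ?_⟩⟩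
    obtain ⟨k, hk⟩ := (hF h).1 hh (ζ i) (AddSubmonoid.subset_closure ⟨i, rfl⟩)
    simp only [Pi.smul_apply, nsmul_eq_mul, mul_assoc, ← mul_sum, hk]
    positivity

/-- With `σ` a full-dimensional simplicial rational cone with
primitive ray generators `ζ i` (first lattice points), `P = σ^∨ ∩ M`
(integral points pairing nonnegatively with all of `σ`, i.e. with the `ζ i`),
and `F = { h ∈ M ⊗ ℚ : ⟨h, s⟩ ∈ ℤ_{≥0} ∀ s ∈ S }` where `S` is generated by
the `ζ i`: the natural inclusion realizes `P` as a submonoid of `F` close to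
`F` (every element of `F` has a positive multiple in `P`). -/
theorem stmt5 {d : ℕ} (ζ : Fin d → (Fin d → ℤ))
    (hprim : ∀ (i : Fin d) (g : Fin d → ℤ) (n : ℕ), ζ i = n • g → n = 1)
    (hlin : LinearIndependent ℚ fun i => fun j => (ζ i j : ℚ))
    (P F : AddSubmonoid (Fin d → ℚ))
    (hP : ∀ h : Fin d → ℚ, h ∈ P ↔
      ((∃ m : Fin d → ℤ, ∀ j, h j = (m j : ℚ)) ∧ ∀ i, 0 ≤ ∑ j, h j * (ζ i j : ℚ)))
    (hF : ∀ h : Fin d → ℚ, h ∈ F ↔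
      ∀ s ∈ AddSubmonoid.closure (Set.range ζ),
        ∃ k : ℕ, ∑ j, h j * (s j : ℚ) = (k : ℚ)) :
    P ≤ F ∧ ∀ h ∈ F, ∃ n : ℕ, 0 < n ∧ n • h ∈ P :=
  stmt5_general ζ P F hP hF
end

section
/- Let σ be a full-dimensional simplicial rational cone in N_ℝ with N ≅ ℤ^d, M = Hom(N, ℤ), P = σ^∨ ∩ M, and let S be the submonoid of σ ∩ N generated by the first lattice points of the rays of σ. Let F = { h ∈ M ⊗ ℚ : ⟨h, s⟩ ∈ ℤ_{≥0} for all s ∈ S }. Then the inclusion i : P → F is a minimal free resolution of P: for any injective monoid homomorphism j : P → G with G ≅ ℕ^d whose image is close to G, there exists a unique monoid homomorphism φ : F → G with j = φ ∘ i. -/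
/-!
The pairings with the ray generators `ζ i` give `ℕ`-valued coordinates `ν` on `F`, injective on
`P`, and for a suitable `N > 0` there are `p k ∈ P` with `ν (p k) = N • e k`; hence
`N • x = ∑ k, ν x k • p k` in `P`. Closeness of `j` forces the matrix `(j (p k)) m` to have at most
one nonzero entry in each column, and primitivity of `ζ k` (an integer vector `w` with
`⟪w, ζ k⟫ = 1`, written as a difference of two points of `P`) then shows that `N` divides its
entries. So `j (p k) = N • g k`, and `e k ↦ g k` is the required extension; it is unique because
every element of `F` has a positive multiple in `P` and `G` is torsion-free.
-/

open Finset Function Matrix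

theorem Int.exists_sum_mul_eq_one_of_primitive {ι : Type*} [Fintype ι] {v : ι → ℤ}
    (hv : ∀ (g : ι → ℤ) (n : ℕ), v = n • g → n = 1) : ∃ c : ι → ℤ, ∑ i, v i * c i = 1 := by
  classical
  set g := univ.gcd v
  have hg : (g.natAbs : ℤ) = g :=
    Int.natAbs_of_nonneg (Int.nonneg_of_normalize_eq_self Finset.normalize_gcd)
  have hdvd : ∀ i, (g.natAbs : ℤ) ∣ v i := fun i => by rw [hg]; exact Finset.gcd_dvd (mem_univ i)
  have hone : g.natAbs = 1 :=
    hv (fun i => v i / g.natAbs) _ (funext fun i => (Int.mul_ediv_cancel' (hdvd i)).symm)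
  obtain ⟨c, hc⟩ := Finset.gcd_eq_sum_mul univ v
  exact ⟨c, by rw [← hc]; change g = 1; rw [← hg, hone, Nat.cast_one]⟩

theorem Rat.exists_pos_nat_mul_eq_intCast {ι : Type*} [Fintype ι] (v : ι → ℚ) :
    ∃ N : ℕ, 0 < N ∧ ∃ w : ι → ℤ, ∀ i, N * v i = w i := by
  refine ⟨∏ i, (v i).den, prod_pos fun i _ => (v i).den_pos, ?_⟩
  have (i : ι) : ∃ z : ℤ, (∏ i, (v i).den : ℕ) * v i = z := by
    obtain ⟨t, ht⟩ := dvd_prod_of_mem (fun i => (v i).den) (mem_univ i)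
    refine ⟨t * (v i).num, ?_⟩
    rw [ht]
    push_cast
    rw [mul_comm, ← mul_assoc, Rat.mul_den_eq_num, mul_comm]
  choose w hw using this
  exact ⟨w, hw⟩

theorem Matrix.eq_of_apply_ne_zero_of_vecMul_eq_single {ι : Type*} [Fintype ι] [DecidableEq ι]
    {c : Matrix ι ι ℕ} (hc : ∀ m, ∃ v : ι → ℕ, ∃ n ≠ 0, v ᵥ* c = Pi.single m n)
    {k l m : ι} (hk : c k m ≠ 0) (hl : c l m ≠ 0) : k = l := by
  have hrow : ∀ m, ∃ r, c r m ≠ 0 ∧ ∀ m' ≠ m, c r m' = 0 := by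
    intro m
    obtain ⟨v, n, hn, hv⟩ := hc m
    have hm : (v ᵥ* c) m ≠ 0 := by rwa [hv, Pi.single_eq_same]
    obtain ⟨r, -, hr⟩ := exists_ne_zero_of_sum_ne_zero hm
    refine ⟨r, right_ne_zero_of_mul hr, fun m' hm' => ?_⟩
    have hm'0 : (v ᵥ* c) m' = 0 := by rw [hv, Pi.single_eq_of_ne hm']
    exact (mul_eq_zero.mp (sum_eq_zero_iff.mp hm'0 r (mem_univ r))).resolve_left
      (left_ne_zero_of_mul hr)
  -- Row `r m` is supported exactly at column `m`; `r` is injective, hence onto, so every row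
  -- of `c` has this form.
  choose r hr_ne hr_zero using hrow
  have hr_inj : Injective r := fun m m' h => by
    by_contra hne
    exact hr_ne m (h ▸ hr_zero m' m hne)
  obtain ⟨mk, rfl⟩ := (Finite.injective_iff_surjective.mp hr_inj) k
  obtain ⟨ml, rfl⟩ := (Finite.injective_iff_surjective.mp hr_inj) l
  have hmk : m = mk := by_contra fun h => hk (hr_zero mk m h)
  have hml : m = ml := by_contra fun h => hl (hr_zero ml m h)
  rw [← hmk, ← hml]

section FreeExtension

variable {ι P G : Type*} [Fintype ι] [DecidableEq ι] [AddCommMonoid P] [AddCommMonoid G]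
  {ν : P →+ (ι → ℕ)} {N : ℕ} {p : ι → P}

theorem nsmul_eq_sum_apply_nsmul (hν : Injective ν) (hp : ∀ k, ν (p k) = Pi.single k N)
    (x : P) : N • x = ∑ k, ν x k • p k := by
  apply hν
  ext i
  simp [map_sum, hp, Pi.single_apply, mul_comm]

theorem dvd_apply_of_forall_exists_eq_single (hν : Injective ν) (hN : 0 < N)
    (hp : ∀ k, ν (p k) = Pi.single k N) (hgen : ∀ k, ∃ a b : P, ν a k = ν b k + 1)
    (j : P →+ (ι → ℕ)) (hclose : ∀ m, ∃ n ≠ 0, ∃ q, j q = Pi.single m n) (k m : ι) :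
    N ∣ j (p k) m := by
  have hexpand (x : P) (m : ι) : N * j x m = ∑ k, ν x k * j (p k) m := by
    simpa [map_sum] using congrFun (congrArg j (nsmul_eq_sum_apply_nsmul hν hp x)) m
  have hcol : ∀ m, ∃ v : ι → ℕ, ∃ n ≠ 0, v ᵥ* Matrix.of (fun k m => j (p k) m) = Pi.single m n := by
    intro m
    obtain ⟨n, hn, q, hq⟩ := hclose m
    refine ⟨ν q, N * n, mul_ne_zero hN.ne' hn, funext fun m' => ?_⟩
    refine (hexpand q m').symm.trans ?_
    rw [hq]
    by_cases h : m' = m <;> simp [h]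
  by_cases hkm : j (p k) m = 0
  · simp [hkm]
  have hcoord (x : P) : N * j x m = ν x k * j (p k) m := by
    rw [hexpand, sum_eq_single k _ (by simp)]
    intro l _ hl
    exact mul_eq_zero_of_right _ (not_not.mp fun h =>
      hl (Matrix.eq_of_apply_ne_zero_of_vecMul_eq_single hcol (c := of _) h hkm))
  obtain ⟨a, b, hab⟩ := hgen k
  have : N * j a m = N * j b m + j (p k) m := by rw [hcoord a, hcoord b, hab]; ring
  exact (Nat.dvd_add_right (dvd_mul_right N _)).mp (this ▸ dvd_mul_right N _)

theorem exists_addMonoidHom_apply_eq (hν : Injective ν) (hN : 0 < N)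
    (hp : ∀ k, ν (p k) = Pi.single k N) (hgen : ∀ k, ∃ a b : P, ν a k = ν b k + 1)
    (eG : G ≃+ (ι → ℕ)) (j : P →+ G) (hclose : ∀ g : G, ∃ n, 0 < n ∧ ∃ x, n • g = j x) :
    ∃ φ : (ι → ℕ) →+ G, ∀ x, φ (ν x) = j x := by
  have hclose' (m : ι) : ∃ n ≠ 0, ∃ q, (eG.toAddMonoidHom.comp j) q = Pi.single m n := by
    obtain ⟨n, hn, q, hq⟩ := hclose (eG.symm (Pi.single m 1))
    refine ⟨n, hn.ne', q, funext fun m' => ?_⟩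
    by_cases h : m' = m <;> simp [← hq, h]
  have hdvd := dvd_apply_of_forall_exists_eq_single hν hN hp hgen _ hclose'
  set g : ι → G := fun k => eG.symm fun m => eG (j (p k)) m / N
  have hg (k : ι) : N • g k = j (p k) :=
    eG.injective (by ext m; simpa [g] using Nat.mul_div_cancel' (hdvd k m))
  have := eG.injective.isAddTorsionFree eG.toAddMonoidHom
  refine ⟨(Fintype.linearCombination ℕ g).toAddMonoidHom, fun x => nsmul_right_injective hN.ne' ?_⟩
  calc N • ∑ k, ν x k • g k = ∑ k, ν x k • j (p k) := by simp only [smul_sum, smul_comm N, hg]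
    _ = N • j x := by rw [← map_nsmul, nsmul_eq_sum_apply_nsmul hν hp, map_sum]; simp

end FreeExtension

theorem AddMonoidHom.eq_of_forall_exists_nsmul_eq {P F G : Type*} [AddMonoid P] [AddMonoid F]
    [AddMonoid G] [IsAddTorsionFree G] (i : P →+ F) (hi : ∀ x, ∃ n ≠ 0, ∃ p, i p = n • x)
    {φ ψ : F →+ G} (h : ∀ p, φ (i p) = ψ (i p)) : φ = ψ := by
  ext x
  obtain ⟨n, hn, p, hp⟩ := hi x
  exact nsmul_right_injective hn (by simp only [← map_nsmul, ← hp, h])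

section Lattice

variable {ι : Type*} [Fintype ι] {Z : Matrix ι ι ℚ} {P F : AddSubmonoid (ι → ℚ)}

def IsIntegerPointsOfCone (Z : Matrix ι ι ℚ) (P : AddSubmonoid (ι → ℚ)) : Prop :=
  ∀ h, h ∈ P ↔ (∃ m : ι → ℤ, ∀ j, h j = m j) ∧ ∀ i, 0 ≤ (Z *ᵥ h) i

noncomputable def mulVecNatCoords (Z : Matrix ι ι ℚ) (F : AddSubmonoid (ι → ℚ))
    (hF : ∀ x ∈ F, ∀ i, ∃ n : ℕ, (Z *ᵥ x) i = n) : F →+ (ι → ℕ) where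
  -- `⌊·⌋₊` only reads off the natural number provided by `hF`.
  toFun x i := ⌊(Z *ᵥ (x : ι → ℚ)) i⌋₊
  map_zero' := by ext; simp
  map_add' x y := by
    ext i
    obtain ⟨a, ha⟩ := hF x x.2 i
    obtain ⟨b, hb⟩ := hF y y.2 i
    simp only [AddSubmonoid.coe_add, mulVec_add, Pi.add_apply, ha, hb, ← Nat.cast_add,
      Nat.floor_natCast]

variable (hF : ∀ x ∈ F, ∀ i, ∃ n : ℕ, (Z *ᵥ x) i = n)

theorem mulVecNatCoords_apply (x : F) (i : ι) :
    (mulVecNatCoords Z F hF x i : ℚ) = (Z *ᵥ (x : ι → ℚ)) i := by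
  obtain ⟨n, hn⟩ := hF x x.2 i
  simp [mulVecNatCoords, hn]

theorem mulVecNatCoords_injective [DecidableEq ι] (hZ : IsUnit Z) :
    Injective (mulVecNatCoords Z F hF) := by
  refine fun x y h => Subtype.ext (mulVec_injective_iff_isUnit.mpr hZ (funext fun i => ?_))
  rw [← mulVecNatCoords_apply hF, ← mulVecNatCoords_apply hF, h]

theorem mulVecNatCoords_eq_of_mulVec_eq {x : F} {v : ι → ℕ}
    (h : Z *ᵥ (x : ι → ℚ) = fun i => (v i : ℚ)) : mulVecNatCoords Z F hF x = v :=
  funext fun i => by exact_mod_cast (mulVecNatCoords_apply hF x i).trans (congrFun h i)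

theorem exists_mulVec_eq_single [DecidableEq ι]
    (hP : IsIntegerPointsOfCone Z P) (hZ : IsUnit Z) :
    ∃ N : ℕ, 0 < N ∧ ∃ p : ι → P, ∀ k, Z *ᵥ (p k : ι → ℚ) = Pi.single k (N : ℚ) := by
  choose f hf using fun k => mulVec_surjective_iff_isUnit.mpr hZ (Pi.single k 1)
  obtain ⟨N, hN, w, hw⟩ := Rat.exists_pos_nat_mul_eq_intCast fun kj : ι × ι => f kj.1 kj.2
  have hNf (k : ι) : Z *ᵥ ((N : ℚ) • f k) = Pi.single k (N : ℚ) := by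
    rw [mulVec_smul, hf, ← Pi.single_smul, smul_eq_mul, mul_one]
  have hmem (k : ι) : (N : ℚ) • f k ∈ P := by
    refine (hP _).mpr ⟨⟨fun j => w (k, j), fun j => hw (k, j)⟩, fun i => ?_⟩
    rw [hNf, Pi.single_apply]
    split_ifs <;> positivity
  exact ⟨N, hN, fun k => ⟨_, hmem k⟩, hNf⟩

theorem exists_mem_add_intCast_mem [DecidableEq ι]
    (hP : IsIntegerPointsOfCone Z P) {N : ℕ} (hN : 0 < N) {p : ι → P}
    (hp : ∀ k, Z *ᵥ (p k : ι → ℚ) = Pi.single k (N : ℚ)) (w : ι → ℤ) :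
    ∃ b ∈ P, b + (fun j => (w j : ℚ)) ∈ P := by
  -- `∑ k, p k` lies in the interior of the cone, so a large multiple of it absorbs `w`.
  have hu : Z *ᵥ (∑ k, (p k : ι → ℚ)) = fun _ => (N : ℚ) := by
    simp [mulVec_sum, hp, Finset.univ_sum_single]
  obtain ⟨T, hT⟩ := Finite.exists_le fun i => ⌈-(Z *ᵥ fun j => (w j : ℚ)) i⌉₊
  have hb : T • ∑ k, (p k : ι → ℚ) ∈ P := nsmul_mem (sum_mem fun k _ => (p k).2) T
  obtain ⟨⟨m, hm⟩, -⟩ := (hP _).mp hb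
  refine ⟨_, hb, (hP _).mpr ⟨⟨m + w, fun j => ?_⟩, fun i => ?_⟩⟩
  · rw [Pi.add_apply, hm j, Pi.add_apply, Int.cast_add]
  · have h1 : -(Z *ᵥ fun j => (w j : ℚ)) i ≤ T :=
      (Nat.le_ceil _).trans (by exact_mod_cast hT i)
    have h2 : (1 : ℚ) ≤ N := by exact_mod_cast hN
    rw [mulVec_add, mulVec_smul, hu, Pi.add_apply, Pi.smul_apply, nsmul_eq_mul]
    nlinarith

theorem exists_mulVecNatCoords_eq_add_one [DecidableEq ι]
    (hP : IsIntegerPointsOfCone Z P) (hPF : P ≤ F)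
    {N : ℕ} (hN : 0 < N) {p : ι → P} (hp : ∀ k, Z *ᵥ (p k : ι → ℚ) = Pi.single k (N : ℚ))
    {k : ι} {w : ι → ℤ} (hw : (Z *ᵥ fun j => (w j : ℚ)) k = 1) :
    ∃ a b : P, mulVecNatCoords Z F hF (AddSubmonoid.inclusion hPF a) k =
      mulVecNatCoords Z F hF (AddSubmonoid.inclusion hPF b) k + 1 := by
  obtain ⟨b, hb, hbw⟩ := exists_mem_add_intCast_mem hP hN hp w
  refine ⟨⟨_, hbw⟩, ⟨b, hb⟩, ?_⟩
  have ha := mulVecNatCoords_apply hF (AddSubmonoid.inclusion hPF ⟨_, hbw⟩) k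
  have hb' := mulVecNatCoords_apply hF (AddSubmonoid.inclusion hPF ⟨b, hb⟩) k
  simp only [AddSubmonoid.coe_inclusion, mulVec_add, Pi.add_apply, hw] at ha hb'
  exact_mod_cast ha.trans (congrArg (· + 1) hb'.symm)

theorem exists_inclusion_eq_nsmul (hF : ∀ x ∈ F, ∀ i, ∃ n : ℕ, (Z *ᵥ x) i = n)
    (hP : IsIntegerPointsOfCone Z P) (hPF : P ≤ F)
    (x : F) : ∃ n ≠ 0, ∃ q : P, AddSubmonoid.inclusion hPF q = n • x := by
  obtain ⟨N, hN, w, hw⟩ := Rat.exists_pos_nat_mul_eq_intCast (x : ι → ℚ)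
  have hmem : N • (x : ι → ℚ) ∈ P := by
    refine (hP _).mpr ⟨⟨w, fun j => by simpa using hw j⟩, fun i => ?_⟩
    obtain ⟨n, hn⟩ := hF x x.2 i
    rw [mulVec_smul, Pi.smul_apply, hn]
    positivity
  exact ⟨N, hN.ne', ⟨_, hmem⟩, rfl⟩

end Lattice

theorem stmt6_general {d : ℕ} (ζ : Fin d → (Fin d → ℤ))
    (hprim : ∀ (i : Fin d) (g : Fin d → ℤ) (n : ℕ), ζ i = n • g → n = 1)
    (hlin : LinearIndependent ℚ fun i => fun j => (ζ i j : ℚ))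
    (P F : AddSubmonoid (Fin d → ℚ))
    (hP : ∀ h : Fin d → ℚ, h ∈ P ↔
      ((∃ m : Fin d → ℤ, ∀ j, h j = (m j : ℚ)) ∧ ∀ i, 0 ≤ ∑ j, h j * (ζ i j : ℚ)))
    (hF : ∀ h : Fin d → ℚ, h ∈ F ↔
      ∀ s ∈ AddSubmonoid.closure (Set.range ζ),
        ∃ k : ℕ, ∑ j, h j * (s j : ℚ) = (k : ℚ))
    (hPF : P ≤ F)
    (G : Type*) [AddCommMonoid G] (eG : G ≃+ (Fin d → ℕ))
    (j : P →+ G)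
    (hclose : ∀ g : G, ∃ n : ℕ, 0 < n ∧ ∃ p : P, n • g = j p) :
    ∃! φ : F →+ G, ∀ p : P, φ (AddSubmonoid.inclusion hPF p) = j p := by
  set Z : Matrix (Fin d) (Fin d) ℚ := Matrix.of fun i j => (ζ i j : ℚ)
  have hpair (h : Fin d → ℚ) (i : Fin d) : ∑ j, h j * (ζ i j : ℚ) = (Z *ᵥ h) i := by
    simp [Z, mulVec, dotProduct, mul_comm]
  have hPZ : IsIntegerPointsOfCone Z P := fun h => by simpa only [hpair] using hP h
  have hFZ : ∀ x ∈ F, ∀ i, ∃ n : ℕ, (Z *ᵥ x) i = n := fun x hx i => by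
    simpa only [hpair] using (hF x).mp hx (ζ i) (AddSubmonoid.subset_closure ⟨i, rfl⟩)
  have hZ : IsUnit Z := linearIndependent_rows_iff_isUnit.mp hlin
  set ν := (mulVecNatCoords Z F hFZ).comp (AddSubmonoid.inclusion hPF)
  obtain ⟨N, hN, p, hp⟩ := exists_mulVec_eq_single hPZ hZ
  have hνp (k : Fin d) : ν (p k) = Pi.single k N :=
    mulVecNatCoords_eq_of_mulVec_eq hFZ <| by
      rw [AddSubmonoid.coe_inclusion, hp]; ext i; simp [Pi.single_apply]
  have hgen (k : Fin d) : ∃ a b : P, ν a k = ν b k + 1 := by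
    obtain ⟨w, hw⟩ := Int.exists_sum_mul_eq_one_of_primitive (hprim k)
    refine exists_mulVecNatCoords_eq_add_one hFZ hPZ hPF hN hp (w := w) ?_
    simpa [Z, mulVec, dotProduct] using congrArg (Int.cast : ℤ → ℚ) hw
  have hν : Injective ν := fun a b h =>
    AddSubmonoid.inclusion_injective hPF (mulVecNatCoords_injective hFZ hZ h)
  obtain ⟨φ, hφ⟩ := exists_addMonoidHom_apply_eq hν hN hνp hgen eG j hclose
  have := eG.injective.isAddTorsionFree eG.toAddMonoidHom
  exact ⟨φ.comp (mulVecNatCoords Z F hFZ), hφ, fun ψ hψ =>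
    AddMonoidHom.eq_of_forall_exists_nsmul_eq _ (exists_inclusion_eq_nsmul hFZ hPZ hPF)
      fun q => (hψ q).trans (hφ q).symm⟩

/-- With `σ` full-dimensional simplicial with primitive ray
generators `ζ i`, `P = σ^∨ ∩ M` and
`F = { h ∈ M ⊗ ℚ : ⟨h, s⟩ ∈ ℤ_{≥0} ∀ s ∈ S }` (`S` generated by the `ζ i`),
the inclusion `i : P → F` is a minimal free resolution: for any injective
monoid homomorphism `j : P → G` with `G ≅ ℕ^d` and image close to `G`, there
is a unique homomorphism `φ : F → G` with `j = φ ∘ i`. -/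
theorem stmt6 {d : ℕ} (ζ : Fin d → (Fin d → ℤ))
    (hprim : ∀ (i : Fin d) (g : Fin d → ℤ) (n : ℕ), ζ i = n • g → n = 1)
    (hlin : LinearIndependent ℚ fun i => fun j => (ζ i j : ℚ))
    (P F : AddSubmonoid (Fin d → ℚ))
    (hP : ∀ h : Fin d → ℚ, h ∈ P ↔
      ((∃ m : Fin d → ℤ, ∀ j, h j = (m j : ℚ)) ∧ ∀ i, 0 ≤ ∑ j, h j * (ζ i j : ℚ)))
    (hF : ∀ h : Fin d → ℚ, h ∈ F ↔
      ∀ s ∈ AddSubmonoid.closure (Set.range ζ),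
        ∃ k : ℕ, ∑ j, h j * (s j : ℚ) = (k : ℚ))
    (hPF : P ≤ F)
    (G : Type*) [AddCommMonoid G] (eG : G ≃+ (Fin d → ℕ))
    (j : P →+ G) (hj : Function.Injective j)
    (hclose : ∀ g : G, ∃ n : ℕ, 0 < n ∧ ∃ p : P, n • g = j p) :
    ∃! φ : F →+ G, ∀ p : P, φ (AddSubmonoid.inclusion hPF p) = j p :=
  stmt6_general ζ hprim hlin P F hP hF hPF G eG j hclose
end

section
/- Every simplicially toric sharp monoid P admits a minimal free resolution, unique up to unique isomorphism: there exists an injective monoid homomorphism i : P → F with F ≅ ℕ^d (d = rank of P^{gp}) such that i(P) is close to F, and for any injective j : P → G with G ≅ ℕ^d and j(P) close to G, there is a unique φ : F → G with j = φ ∘ i. -/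
/-!
The `d` elements `f₁, …, f_d` generating a submonoid close to `P` form a `ℚ`-basis of `ℚ^d`, and
the dual coordinates `L_k` are nonnegative on `P`: `P` lies in the simplicial cone spanned by the
`f_l`. Rescaling each `L_k` to the primitive integral functional `λ_k : ℤ^d → ℤ` gives
`i = (λ₁, …, λ_d)`, and `i(f_k)` is a positive multiple of the `k`-th unit vector, so `i(P)` is
close to `ℕ^d`. If `j : P → ℕ^d` also has close image, then `j(p) = n e_r` for some `p` forces every
coordinate `j_r` to vanish on all rays but one, `f_{σ r}`; hence `j_r` is a rational multiple of
`λ_{σ r}`, and primitivity makes the multiple a natural number `a_r`. Then `φ(x)_r = a_r x_{σ r}`,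
and it is unique because `i(P)` is close to `ℕ^d` and `ℕ^d` is torsion-free.
-/

open Function

namespace AddSubmonoid

variable {M : Type*} [AddCommMonoid M]

/-- `S` is close to `M` in the sense of the paper exactly when `S.rootClosure = ⊤`. -/
def rootClosure (S : AddSubmonoid M) : AddSubmonoid M where
  carrier := {m | ∃ n, 0 < n ∧ n • m ∈ S}
  zero_mem' := ⟨1, one_pos, by simp⟩
  add_mem' := by
    rintro a b ⟨m, hm, ha⟩ ⟨n, hn, hb⟩
    refine ⟨m * n, mul_pos hm hn, ?_⟩
    rw [smul_add, mul_nsmul, mul_comm, mul_nsmul]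
    exact S.add_mem (S.nsmul_mem ha n) (S.nsmul_mem hb m)

theorem mem_rootClosure {S : AddSubmonoid M} {m : M} :
    m ∈ S.rootClosure ↔ ∃ n, 0 < n ∧ n • m ∈ S :=
  Iff.rfl

theorem rootClosure_closure_range_eq_top {ι : Type*} {P : AddSubmonoid M} {F : ι → P}
    (h : ∀ p ∈ P, ∃ n, 0 < n ∧ n • p ∈ closure (Set.range fun l => (F l : M))) :
    (closure (Set.range F)).rootClosure = ⊤ := by
  refine eq_top_iff.mpr fun p _ => ?_
  obtain ⟨n, hn, hnp⟩ := h p p.2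
  rw [Set.range_comp' Subtype.val F, ← P.coe_subtype, ← AddMonoidHom.map_mclosure] at hnp
  obtain ⟨q, hq, hqp⟩ := hnp
  obtain rfl : q = n • p := Subtype.ext (by simpa using hqp)
  exact ⟨n, hn, hq⟩

theorem exists_sub_eq_of_closure_eq_top {G : Type*} [AddCommGroup G]
    {S : AddSubmonoid G} (h : AddSubgroup.closure (S : Set G) = ⊤) (z : G) :
    ∃ p ∈ S, ∃ q ∈ S, z = p - q := by
  induction (h ▸ AddSubgroup.mem_top z : z ∈ AddSubgroup.closure (S : Set G))
    using AddSubgroup.closure_induction with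
  | mem x hx => exact ⟨x, hx, 0, S.zero_mem, (sub_zero x).symm⟩
  | zero => exact ⟨0, S.zero_mem, 0, S.zero_mem, (sub_zero 0).symm⟩
  | add x y _ _ hx hy =>
    obtain ⟨p, hp, q, hq, rfl⟩ := hx
    obtain ⟨p', hp', q', hq', rfl⟩ := hy
    exact ⟨p + p', S.add_mem hp hp', q + q', S.add_mem hq hq', by abel⟩
  | neg x _ hx =>
    obtain ⟨p, hp, q, hq, rfl⟩ := hx
    exact ⟨q, hq, p, hp, neg_sub p q⟩

end AddSubmonoid

namespace AddMonoidHom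

theorem eq_of_eqOn_of_rootClosure_eq_top {M V : Type*} [AddCommMonoid M]
    [AddMonoid V] [IsAddTorsionFree V] {s : Set M}
    (hs : (AddSubmonoid.closure s).rootClosure = ⊤) {μ ν : M →+ V} (h : Set.EqOn μ ν s) :
    μ = ν := by
  ext m
  obtain ⟨n, hn, hm⟩ := (hs ▸ AddSubmonoid.mem_top m : m ∈ (AddSubmonoid.closure s).rootClosure)
  refine IsAddTorsionFree.nsmul_right_injective hn.ne' ?_
  simpa only [map_nsmul] using AddMonoidHom.eqOn_closureM h hm

theorem rootClosure_mrange_eq_top_iff {M N : Type*} [AddCommMonoid M]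
    [AddCommMonoid N] (i : M →+ N) :
    (mrange i).rootClosure = ⊤ ↔ ∀ x, ∃ n, 0 < n ∧ ∃ p, n • x = i p := by
  simp [AddSubmonoid.eq_top_iff', AddSubmonoid.mem_rootClosure, eq_comm]

theorem exists_natCast_comp_eq {M : Type*} [AddZeroClass M] (μ : M →+ ℤ)
    (h : ∀ m, 0 ≤ μ m) : ∃ ν : M →+ ℕ, ∀ m, (ν m : ℤ) = μ m :=
  ⟨{ toFun := fun m => (μ m).toNat
     map_zero' := by simp
     map_add' := fun a b => by simp [Int.toNat_add (h a) (h b)] },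
    fun m => Int.toNat_of_nonneg (h m)⟩

theorem exists_intCast_comp_eq {G : Type*} [AddZeroClass G] (ν : G →+ ℚ)
    (h : ∀ g, ∃ m : ℤ, ν g = m) : ∃ μ : G →+ ℤ, ∀ g, (μ g : ℚ) = ν g := by
  choose μ hμ using h
  exact ⟨.mk' μ fun a b => Int.cast_injective (by push_cast; rw [← hμ, ← hμ, ← hμ, map_add]),
    fun g => (hμ g).symm⟩

theorem exists_intCast_eq_nat_mul {ι : Type*} [Fintype ι] (L : (ι → ℤ) →+ ℚ) :
    ∃ D : ℕ, 0 < D ∧ ∃ A : (ι → ℤ) →+ ℤ, ∀ z, (A z : ℚ) = D * L z := by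
  classical
  set D := ∏ r, (L (Pi.single r 1)).den
  have hD r : ∃ m : ℤ, D * L (Pi.single r 1) = m := by
    obtain ⟨c, hc⟩ := Finset.dvd_prod_of_mem (fun r => (L (Pi.single r 1)).den) (Finset.mem_univ r)
    refine ⟨c * (L (Pi.single r 1)).num, ?_⟩
    have hc' : (D : ℚ) = (L (Pi.single r 1)).den * c := by exact_mod_cast hc
    rw [hc', Int.cast_mul, ← Rat.mul_den_eq_num]
    push_cast
    ring
  choose m hm using hD
  refine ⟨D, Finset.prod_pos fun r _ => (L _).den_pos, ?_⟩
  refine (D • L).exists_intCast_comp_eq fun z => ⟨∑ r, z r * m r, ?_⟩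
  conv_lhs => rw [pi_eq_sum_univ' z]
  simp only [AddMonoidHom.smul_apply, map_sum, map_zsmul]
  simp only [nsmul_eq_mul, zsmul_eq_mul, Int.cast_sum, Int.cast_mul, ← hm]

theorem exists_surjective_mul_eq {G : Type*} [AddGroup G] (A : G →+ ℤ) (hA : A ≠ 0) :
    ∃ g : ℕ, 0 < g ∧ ∃ μ : G →+ ℤ, Surjective μ ∧ ∀ z, A z = g * μ z := by
  obtain ⟨a, ha⟩ := Int.subgroup_cyclic A.range
  have hrange : A.range = AddSubgroup.zmultiples (a.natAbs : ℤ) := by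
    rw [ha, ← AddSubgroup.zmultiples_eq_closure, Int.zmultiples_natAbs]
  have hdvd z : (a.natAbs : ℤ) ∣ A z := Int.mem_zmultiples_iff.mp (hrange ▸ ⟨z, rfl⟩)
  have hg : 0 < a.natAbs := by
    refine Nat.pos_of_ne_zero fun h0 => hA (AddMonoidHom.ext fun z => ?_)
    simpa [h0] using hdvd z
  choose μ hμ using hdvd
  refine ⟨a.natAbs, hg, .mk' μ fun x y => ?_, ?_, hμ⟩
  · refine mul_left_cancel₀ (a := (a.natAbs : ℤ)) (by positivity) ?_
    rw [mul_add, ← hμ, ← hμ, ← hμ, map_add]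
  · obtain ⟨z₀, hz₀⟩ : (a.natAbs : ℤ) ∈ A.range := hrange ▸ AddSubgroup.mem_zmultiples _
    have h1 : μ z₀ = 1 := by
      refine mul_left_cancel₀ (a := (a.natAbs : ℤ)) (by positivity) ?_
      rw [← hμ, mul_one, ← hz₀]
    exact fun n => ⟨n • z₀, by rw [map_zsmul, mk'_apply, h1, smul_eq_mul, mul_one]⟩

theorem exists_surjective_eq_mul {ι : Type*} [Fintype ι] (L : (ι → ℤ) →+ ℚ)
    (hL : L ≠ 0) :
    ∃ κ : ℚ, 0 < κ ∧ ∃ μ : (ι → ℤ) →+ ℤ, Surjective μ ∧ ∀ z, (μ z : ℚ) = κ * L z := by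
  obtain ⟨D, hD, A, hA⟩ := L.exists_intCast_eq_nat_mul
  have hA0 : A ≠ 0 := by
    rintro rfl
    exact hL (AddMonoidHom.ext fun z => by simpa [hD.ne', eq_comm] using hA z)
  obtain ⟨g, hg, μ, hμ, hAμ⟩ := A.exists_surjective_mul_eq hA0
  refine ⟨D / g, by positivity, μ, hμ, fun z => ?_⟩
  rw [div_mul_eq_mul_div, ← hA, hAμ]
  push_cast
  field_simp

end AddMonoidHom

namespace SimplicialToric

variable {d : ℕ} {P : AddSubmonoid (Fin d → ℤ)} {F : Fin d → P}
  {L : (Fin d → ℤ) →+ (Fin d → ℚ)}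

theorem top_le_span_intCast (hrank : AddSubgroup.closure (P : Set (Fin d → ℤ)) = ⊤)
    (hF : (AddSubmonoid.closure (Set.range F)).rootClosure = ⊤) :
    ⊤ ≤ Submodule.span ℚ (Set.range fun l => (Int.castAddHom ℚ).compLeft (Fin d) (F l)) := by
  set c : (Fin d → ℤ) →+ (Fin d → ℚ) := (Int.castAddHom ℚ).compLeft (Fin d)
  set V := Submodule.span ℚ (Set.range fun l => c (F l))
  have hcP (p : P) : c p ∈ V := by
    obtain ⟨n, hn, hnp⟩ := hF ▸ AddSubmonoid.mem_top p
    have hle : AddSubmonoid.closure (Set.range F) ≤ V.toAddSubmonoid.comap (c.comp P.subtype) :=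
      AddSubmonoid.closure_le.mpr <| by
        rintro _ ⟨l, rfl⟩
        exact Submodule.subset_span ⟨l, rfl⟩
    have h := hle hnp
    rw [AddSubmonoid.mem_comap, map_nsmul, ← Nat.cast_smul_eq_nsmul ℚ] at h
    exact (Submodule.smul_mem_iff V (Nat.cast_ne_zero.mpr hn.ne')).mp h
  have hcZ (z : Fin d → ℤ) : c z ∈ V := by
    have hle : AddSubgroup.closure (P : Set (Fin d → ℤ)) ≤ V.toAddSubgroup.comap c :=
      (AddSubgroup.closure_le _).mpr fun p hp => hcP ⟨p, hp⟩
    exact hle (hrank ▸ AddSubgroup.mem_top z)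
  rw [← (Pi.basisFun ℚ (Fin d)).span_eq, Submodule.span_le]
  rintro _ ⟨r, rfl⟩
  have : Pi.basisFun ℚ (Fin d) r = c (Pi.single r 1) := by
    ext s
    simp [c, Pi.single_apply]
  rw [SetLike.mem_coe, this]
  exact hcZ _

theorem exists_coordinates (hrank : AddSubgroup.closure (P : Set (Fin d → ℤ)) = ⊤)
    (hF : (AddSubmonoid.closure (Set.range F)).rootClosure = ⊤) :
    ∃ L : (Fin d → ℤ) →+ (Fin d → ℚ), Injective L ∧ ∀ l, L (F l) = Pi.single l 1 := by
  set B := basisOfTopLeSpanOfCardEqFinrank _ (top_le_span_intCast hrank hF) (by simp)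
  refine ⟨B.equivFun.toLinearMap.toAddMonoidHom.comp ((Int.castAddHom ℚ).compLeft (Fin d)),
    B.equivFun.injective.comp fun z w h => funext fun k => Int.cast_injective (congrFun h k),
    fun l => ?_⟩
  have hB : (Int.castAddHom ℚ).compLeft (Fin d) (F l) = B l := by simp [B]
  simp [hB, Finsupp.single_eq_pi_single]

theorem coordinates_nonneg (hLF : ∀ l, L (F l) = Pi.single l 1)
    (hF : (AddSubmonoid.closure (Set.range F)).rootClosure = ⊤) (p : P) (k : Fin d) :
    0 ≤ L p k := by
  obtain ⟨n, hn, hnp⟩ := hF ▸ AddSubmonoid.mem_top p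
  have hclosure : ∀ q ∈ AddSubmonoid.closure (Set.range F), 0 ≤ L q k := by
    intro q hq
    induction hq using AddSubmonoid.closure_induction with
    | mem x hx =>
      obtain ⟨l, rfl⟩ := hx
      rw [hLF, Pi.single_apply]
      split_ifs <;> norm_num
    | zero => simp
    | add x y _ _ hx hy => simpa using add_nonneg hx hy
  have := hclosure _ hnp
  rw [AddSubmonoidClass.coe_nsmul, map_nsmul, Pi.smul_apply, nsmul_eq_mul] at this
  exact nonneg_of_mul_nonneg_right this (by exact_mod_cast hn)

theorem eq_sum_mul_coordinates (hLF : ∀ l, L (F l) = Pi.single l 1)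
    (hF : (AddSubmonoid.closure (Set.range F)).rootClosure = ⊤) (ν : P →+ ℚ) (p : P) :
    ν p = ∑ l, ν (F l) * L p l := by
  classical
  have h : ν = ∑ l, ν (F l) • (Pi.evalAddMonoidHom (fun _ => ℚ) l).comp (L.comp P.subtype) := by
    refine AddMonoidHom.eq_of_eqOn_of_rootClosure_eq_top hF ?_
    rintro _ ⟨k, rfl⟩
    simp [hLF, Pi.single_apply]
  conv_lhs => rw [h]
  simp

theorem exists_coordinate_support (hLF : ∀ l, L (F l) = Pi.single l 1)
    (hF : (AddSubmonoid.closure (Set.range F)).rootClosure = ⊤) {j : P →+ (Fin d → ℕ)}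
    (hj : (AddMonoidHom.mrange j).rootClosure = ⊤) (r : Fin d) :
    ∃ l, 0 < j (F l) r ∧ ∀ s ≠ r, j (F l) s = 0 := by
  obtain ⟨n, hn, p, hp⟩ := (j.rootClosure_mrange_eq_top_iff.mp hj) (Pi.single r 1)
  have hjp s : (j p s : ℚ) = ∑ l, (j (F l) s : ℚ) * L p l := eq_sum_mul_coordinates hLF hF
    ((Nat.castAddMonoidHom ℚ).comp ((Pi.evalAddMonoidHom _ s).comp j)) p
  have hterm s : ∀ l ∈ Finset.univ, 0 ≤ (j (F l) s : ℚ) * L p l :=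
    fun l _ => mul_nonneg (Nat.cast_nonneg _) (coordinates_nonneg hLF hF p l)
  have hpos : 0 < ∑ l, (j (F l) r : ℚ) * L p l := by
    rw [← hjp, ← hp]
    simpa using hn
  obtain ⟨l, -, hl⟩ := (Finset.sum_pos_iff_of_nonneg (hterm r)).mp hpos
  refine ⟨l, by exact_mod_cast pos_of_mul_pos_left hl (coordinates_nonneg hLF hF p l), ?_⟩
  intro s hs
  have hzero : ∑ l, (j (F l) s : ℚ) * L p l = 0 := by
    rw [← hjp, ← hp]
    simp [hs]
  have := (Finset.sum_eq_zero_iff_of_nonneg (hterm s)).mp hzero l (Finset.mem_univ l)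
  exact_mod_cast (mul_eq_zero.mp this).resolve_right
    (pos_of_mul_pos_right hl (Nat.cast_nonneg _)).ne'

theorem exists_eval_eq_zero_of_ne (hLF : ∀ l, L (F l) = Pi.single l 1)
    (hF : (AddSubmonoid.closure (Set.range F)).rootClosure = ⊤) {j : P →+ (Fin d → ℕ)}
    (hj : (AddMonoidHom.mrange j).rootClosure = ⊤) :
    ∃ σ : Fin d → Fin d, ∀ r l, l ≠ σ r → j (F l) r = 0 := by
  choose σ hσpos hσzero using exists_coordinate_support hLF hF hj
  have hσ : Injective σ := fun r r' h => by_contra fun hne =>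
    (hσpos r').ne' (h ▸ hσzero r r' (Ne.symm hne))
  refine ⟨σ, fun r l hl => ?_⟩
  obtain ⟨r', rfl⟩ := (Finite.injective_iff_surjective.mp hσ) l
  exact hσzero r' r fun h => hl (h ▸ rfl)

theorem exists_nat_mul_eq_of_eq_zero (hLF : ∀ l, L (F l) = Pi.single l 1)
    (hF : (AddSubmonoid.closure (Set.range F)).rootClosure = ⊤) {i : P →+ (Fin d → ℕ)}
    {k : Fin d} {κ : ℚ} (hκ : 0 < κ) (hi : ∀ p, (i p k : ℚ) = κ * L p k)
    (hi₁ : ∃ p q, i p k = i q k + 1) (ν : P →+ ℕ) (hν : ∀ l ≠ k, ν (F l) = 0) :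
    ∃ a : ℕ, ∀ p, ν p = a * i p k := by
  have hνL p : (ν p : ℚ) = ν (F k) * L p k := by
    rw [show (ν p : ℚ) = (Nat.castAddMonoidHom ℚ).comp ν p from rfl,
      eq_sum_mul_coordinates hLF hF, Finset.sum_eq_single k]
    · rfl
    · intro l _ hl
      simp [hν l hl]
    · simp
  obtain ⟨p₀, q₀, h₁⟩ := hi₁
  have hκ₁ : κ * (L p₀ k - L q₀ k) = 1 := by
    have : (i p₀ k : ℚ) = i q₀ k + 1 := by exact_mod_cast h₁
    rw [hi, hi] at this
    linear_combination this
  -- `a` is the value at `p₀ - q₀`, where the primitive coordinate is `1`, of the extension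
  -- `ν (F k) • L_k` of `ν` to `ℤ^d`; it is therefore an integer.
  obtain ⟨a, ha_def⟩ : ∃ a : ℤ, a = ν p₀ - ν q₀ := ⟨_, rfl⟩
  have ha : (a : ℚ) * κ = ν (F k) := by
    rw [ha_def]
    push_cast
    rw [hνL p₀, hνL q₀]
    linear_combination (ν (F k) : ℚ) * hκ₁
  have ha0 : 0 ≤ a := by
    have : (0 : ℚ) ≤ a := nonneg_of_mul_nonneg_left (ha ▸ Nat.cast_nonneg _) hκ
    exact_mod_cast this
  lift a to ℕ using ha0 with a
  refine ⟨a, fun p => ?_⟩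
  have : (ν p : ℚ) = a * i p k := by
    rw [hνL, hi, ← ha]
    push_cast
    ring
  exact_mod_cast this

theorem exists_primitive_coordinates (hrank : AddSubgroup.closure (P : Set (Fin d → ℤ)) = ⊤)
    (hLF : ∀ l, L (F l) = Pi.single l 1)
    (hF : (AddSubmonoid.closure (Set.range F)).rootClosure = ⊤) :
    ∃ i : P →+ (Fin d → ℕ), ∃ κ : Fin d → ℚ, (∀ k, 0 < κ k) ∧
      (∀ p k, (i p k : ℚ) = κ k * L p k) ∧ ∀ k, ∃ p q, i p k = i q k + 1 := by
  have hL0 k : (Pi.evalAddMonoidHom (fun _ => ℚ) k).comp L ≠ 0 := fun h => by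
    simpa [hLF] using DFunLike.congr_fun h (F k : Fin d → ℤ)
  choose κ hκ μ hμsurj hμ using fun k => AddMonoidHom.exists_surjective_eq_mul _ (hL0 k)
  have hμP k (p : P) : 0 ≤ μ k p := by
    have : (0 : ℚ) ≤ μ k p := by
      rw [hμ]
      exact mul_nonneg (hκ k).le (coordinates_nonneg hLF hF p k)
    exact_mod_cast this
  choose ι hι using fun k => ((μ k).comp P.subtype).exists_natCast_comp_eq (hμP k)
  refine ⟨AddMonoidHom.pi ι, κ, hκ, fun p k => ?_, fun k => ?_⟩
  · have : ((ι k p : ℤ) : ℚ) = κ k * L p k := by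
      rw [hι]
      exact hμ k p
    exact_mod_cast this
  · obtain ⟨z, hz⟩ := hμsurj k 1
    obtain ⟨p, hp, q, hq, rfl⟩ := AddSubmonoid.exists_sub_eq_of_closure_eq_top hrank z
    have hp' := hι k ⟨p, hp⟩
    have hq' := hι k ⟨q, hq⟩
    rw [map_sub] at hz
    refine ⟨⟨p, hp⟩, ⟨q, hq⟩, ?_⟩
    simp only [AddMonoidHom.comp_apply, AddSubmonoid.coe_subtype] at hp' hq'
    show ι k _ = ι k _ + 1
    omega

theorem injective_of_eq_mul_coordinates (hL : Injective L) {i : P →+ (Fin d → ℕ)}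
    {κ : Fin d → ℚ} (hκ : ∀ k, 0 < κ k) (hi : ∀ p k, (i p k : ℚ) = κ k * L p k) : Injective i :=
  fun p q h => Subtype.ext <| hL <| funext fun k =>
    mul_left_cancel₀ (hκ k).ne' <| by rw [← hi, ← hi, h]

theorem rootClosure_mrange_eq_top (hLF : ∀ l, L (F l) = Pi.single l 1)
    {i : P →+ (Fin d → ℕ)} {κ : Fin d → ℚ} (hκ : ∀ k, 0 < κ k)
    (hi : ∀ p k, (i p k : ℚ) = κ k * L p k) : (AddMonoidHom.mrange i).rootClosure = ⊤ := by
  classical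
  have hsingle k : Pi.single k 1 ∈ (AddMonoidHom.mrange i).rootClosure := by
    refine ⟨i (F k) k, ?_, F k, funext fun l => ?_⟩
    · have : (0 : ℚ) < i (F k) k := by simpa [hi, hLF] using hκ k
      exact_mod_cast this
    · have : (i (F k) l : ℚ) = if l = k then i (F k) k else 0 := by
        by_cases hl : l = k <;> simp [hl, hi, hLF]
      rw [Pi.smul_apply, Pi.single_apply, smul_eq_mul, mul_ite, mul_one, mul_zero]
      exact_mod_cast this
  refine eq_top_iff.mpr fun x _ => ?_
  rw [pi_eq_sum_univ' x]
  exact AddSubmonoid.sum_mem _ fun k _ => AddSubmonoid.nsmul_mem _ (hsingle k) _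

theorem existsUnique_comp_eq (hLF : ∀ l, L (F l) = Pi.single l 1)
    (hF : (AddSubmonoid.closure (Set.range F)).rootClosure = ⊤) {i : P →+ (Fin d → ℕ)}
    (hi : (AddMonoidHom.mrange i).rootClosure = ⊤)
    (hprim : ∀ k (ν : P →+ ℕ), (∀ l ≠ k, ν (F l) = 0) → ∃ a : ℕ, ∀ p, ν p = a * i p k)
    {j : P →+ (Fin d → ℕ)} (hj : (AddMonoidHom.mrange j).rootClosure = ⊤) :
    ∃! φ : (Fin d → ℕ) →+ (Fin d → ℕ), ∀ p, φ (i p) = j p := by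
  obtain ⟨σ, hσ⟩ := exists_eval_eq_zero_of_ne hLF hF hj
  choose a ha using fun r => hprim (σ r) ((Pi.evalAddMonoidHom _ r).comp j) (hσ r)
  set φ := AddMonoidHom.pi fun r => a r • Pi.evalAddMonoidHom (fun _ => ℕ) (σ r)
  have hφ p : φ (i p) = j p := funext fun r => (ha r p).symm
  refine ⟨φ, hφ, fun ψ hψ => AddMonoidHom.eq_of_eqOn_of_rootClosure_eq_top
    (s := Set.range i) (by rwa [AddMonoidHom.mclosure_range]) ?_⟩
  rintro _ ⟨p, rfl⟩
  rw [hψ, hφ]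

end SimplicialToric

theorem stmt7_general {d : ℕ} (P : AddSubmonoid (Fin d → ℤ))
    (hrank : AddSubgroup.closure (P : Set (Fin d → ℤ)) = ⊤)
    (hsimp : ∃ f : Fin d → (Fin d → ℤ), (∀ i, f i ∈ P) ∧
      ∀ p ∈ P, ∃ n : ℕ, 0 < n ∧ n • p ∈ AddSubmonoid.closure (Set.range f)) :
    ∃ i : P →+ (Fin d → ℕ), Function.Injective i ∧
      (∀ x : Fin d → ℕ, ∃ n : ℕ, 0 < n ∧ ∃ p : P, n • x = i p) ∧
      (∀ j : P →+ (Fin d → ℕ), Function.Injective j →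
        (∀ x : Fin d → ℕ, ∃ n : ℕ, 0 < n ∧ ∃ p : P, n • x = j p) →
        ∃! φ : (Fin d → ℕ) →+ (Fin d → ℕ), ∀ p : P, φ (i p) = j p) := by
  obtain ⟨f, hfP, hf⟩ := hsimp
  set F : Fin d → P := fun l => ⟨f l, hfP l⟩
  have hF : (AddSubmonoid.closure (Set.range F)).rootClosure = ⊤ :=
    AddSubmonoid.rootClosure_closure_range_eq_top hf
  obtain ⟨L, hLinj, hLF⟩ := SimplicialToric.exists_coordinates hrank hF
  obtain ⟨i, κ, hκ, hiL, hi₁⟩ := SimplicialToric.exists_primitive_coordinates hrank hLF hF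
  have hi := SimplicialToric.rootClosure_mrange_eq_top hLF hκ hiL
  refine ⟨i, SimplicialToric.injective_of_eq_mul_coordinates hLinj hκ hiL,
    i.rootClosure_mrange_eq_top_iff.mp hi, fun j _ hj => ?_⟩
  refine SimplicialToric.existsUnique_comp_eq hLF hF hi (fun k => ?_)
    (j.rootClosure_mrange_eq_top_iff.mpr hj)
  exact SimplicialToric.exists_nat_mul_eq_of_eq_zero hLF hF (hκ k) (hiL · k) (hi₁ k)

/-- Every simplicially toric sharp monoid admits a minimal free
resolution. `P` is realized (by its canonical embedding, rank `P^gp = d`) as a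
finitely generated sharp saturated submonoid of `ℤ^d` generating `ℤ^d` as a
group, admitting a submonoid generated by `d` elements close to `P`.
Conclusion: there is an injective `i : P →+ ℕ^d` with image close to `ℕ^d`
which is initial among all such maps (here the target free monoid `G ≅ ℕ^d`
is identified with `ℕ^d`); the unique factorization expresses uniqueness up
to unique isomorphism. -/
theorem stmt7 {d : ℕ} (P : AddSubmonoid (Fin d → ℤ))
    (hsharp : ∀ p ∈ P, -p ∈ P → p = 0)
    (hfg : P.FG)
    (hsat : ∀ x ∈ AddSubgroup.closure (P : Set (Fin d → ℤ)),
      ∀ n : ℕ, 0 < n → n • x ∈ P → x ∈ P)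
    (hrank : AddSubgroup.closure (P : Set (Fin d → ℤ)) = ⊤)
    (hsimp : ∃ f : Fin d → (Fin d → ℤ), (∀ i, f i ∈ P) ∧
      ∀ p ∈ P, ∃ n : ℕ, 0 < n ∧ n • p ∈ AddSubmonoid.closure (Set.range f)) :
    ∃ i : P →+ (Fin d → ℕ), Function.Injective i ∧
      (∀ x : Fin d → ℕ, ∃ n : ℕ, 0 < n ∧ ∃ p : P, n • x = i p) ∧
      (∀ j : P →+ (Fin d → ℕ), Function.Injective j →
        (∀ x : Fin d → ℕ, ∃ n : ℕ, 0 < n ∧ ∃ p : P, n • x = j p) →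
        ∃! φ : (Fin d → ℕ) →+ (Fin d → ℕ), ∀ p : P, φ (i p) = j p) :=
  stmt7_general P hrank hsimp
end

section
/- Conversely to the previous statement: let L : N₁ → N₂ be a lattice homomorphism mapping σ into δ (full-dimensional simplicial cones with free-nets σ^0, δ^0). If the dual map L^∨ ⊗ ℚ maps F_δ = { m ∈ M₂ ⊗ ℚ : ⟨m, δ^0⟩ ⊆ ℤ_{≥0} } into F_σ = { m ∈ M₁ ⊗ ℚ : ⟨m, σ^0⟩ ⊆ ℤ_{≥0} }, then L(σ^0) ⊆ δ^0. -/
/-!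
Let `A` be the rational matrix whose rows are the generators `η₂ i`. They form a basis, so the
columns of `A⁻¹` are the dual basis functionals; these pair to `0` or `1` with each generator and
hence lie in `F_δ`. Pairing `L x` with them returns its coordinates in the basis `η₂`, which the
hypothesis on `L^∨` forces to be natural numbers, so `L x` lies in the monoid spanned by `η₂`.
-/

open Matrix

/-- The net `F_S` of rational functionals taking values in `ℤ_{≥0}` on `S`. -/
def dualNet {ι : Type*} [Fintype ι] (S : Set (ι → ℤ)) : Set (ι → ℚ) :=
  {m | ∀ s ∈ S, ∃ k : ℕ, m ⬝ᵥ (fun j => (s j : ℚ)) = k}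

section DualNet
variable {ι : Type*} [Fintype ι]

theorem dualNet_addSubmonoidClosure (S : Set (ι → ℤ)) :
    dualNet (AddSubmonoid.closure S : Set (ι → ℤ)) = dualNet S := by
  refine subset_antisymm (fun m hm s hs => hm s (AddSubmonoid.subset_closure hs))
    fun m hm s hs => ?_
  induction hs using AddSubmonoid.closure_induction with
  | mem s hs => exact hm s hs
  | zero => exact ⟨0, by simp⟩
  | add s t _ _ hs ht =>
    obtain ⟨k, hk⟩ := hs
    obtain ⟨l, hl⟩ := ht
    refine ⟨k + l, ?_⟩
    rw [Nat.cast_add, ← hk, ← hl, ← dotProduct_add]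
    congr 1; ext; simp

variable [DecidableEq ι]

theorem mem_addSubmonoidClosure_range_of_forall_mem_dualNet {η : ι → ι → ℤ}
    (hη : LinearIndependent ℚ fun i j => (η i j : ℚ)) {v : ι → ℤ}
    (hv : ∀ m ∈ dualNet (Set.range η), ∃ k : ℕ, m ⬝ᵥ (fun j => (v j : ℚ)) = k) :
    v ∈ AddSubmonoid.closure (Set.range η) := by
  set A : Matrix ι ι ℚ := Matrix.of fun i j => (η i j : ℚ)
  have hA : IsUnit A.det := (isUnit_iff_isUnit_det A).1 (linearIndependent_rows_iff_isUnit.1 hη)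
  have hcol_mem : ∀ j, A⁻¹.col j ∈ dualNet (Set.range η) := by
    rintro j _ ⟨t, rfl⟩
    have hpair : A⁻¹.col j ⬝ᵥ A t = (1 : Matrix ι ι ℚ) t j := by
      rw [← mul_nonsing_inv A hA, mul_apply', dotProduct_comm]; rfl
    rw [one_apply] at hpair
    split_ifs at hpair
    exacts [⟨1, by rw [Nat.cast_one, ← hpair]; rfl⟩, ⟨0, by rw [Nat.cast_zero, ← hpair]; rfl⟩]
  choose n hn using fun j => hv _ (hcol_mem j)
  have hcoord : (fun j => (v j : ℚ)) = (fun j => (n j : ℚ)) ᵥ* A := by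
    have hcoeff : (fun j => (v j : ℚ)) ᵥ* A⁻¹ = fun j => (n j : ℚ) := funext fun j => by
      rw [← hn, dotProduct_comm]; rfl
    rw [← hcoeff, vecMul_vecMul, nonsing_inv_mul A hA, vecMul_one]
  rw [AddSubmonoid.mem_closure_range_iff_of_fintype]
  refine ⟨n, funext fun k => ?_⟩
  have hk : (v k : ℚ) = ∑ i, (n i : ℚ) * η i k := congrFun hcoord k
  rw [Finset.sum_apply]
  exact_mod_cast hk

end DualNet

theorem stmt13_general {d₁ d₂ : ℕ} (η₁ : Fin d₁ → (Fin d₁ → ℤ)) (η₂ : Fin d₂ → (Fin d₂ → ℤ))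
    (hlin₂ : LinearIndependent ℚ fun i => fun j => (η₂ i j : ℚ))
    (L : (Fin d₁ → ℤ) →+ (Fin d₂ → ℤ))
    (hdual : ∀ m : Fin d₂ → ℚ,
      (∀ s ∈ AddSubmonoid.closure (Set.range η₂),
        ∃ k : ℕ, ∑ j, m j * (s j : ℚ) = (k : ℚ)) →
      ∀ s ∈ AddSubmonoid.closure (Set.range η₁),
        ∃ k : ℕ, ∑ j, m j * ((L s) j : ℚ) = (k : ℚ)) :
    ∀ x ∈ AddSubmonoid.closure (Set.range η₁),
      L x ∈ AddSubmonoid.closure (Set.range η₂) := by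
  intro x hx
  refine mem_addSubmonoidClosure_range_of_forall_mem_dualNet hlin₂ fun m hm => ?_
  rw [← dualNet_addSubmonoidClosure] at hm
  exact hdual m hm x hx

/-- converse of 12: With `L : N₁ → N₂` mapping the cone `σ`
(spanned by the free-net generators `η₁ i`) into `δ` (spanned by `η₂ i`),
if the dual map `L^∨ ⊗ ℚ` maps `F_δ` into `F_σ` — i.e. (by adjunction
`⟨L^∨ m, s⟩ = ⟨m, L s⟩`) for every `m` with `⟨m, s⟩ ∈ ℤ_{≥0}` for all
`s ∈ δ^0` one has `⟨m, L s⟩ ∈ ℤ_{≥0}` for all `s ∈ σ^0` — then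
`L(σ^0) ⊆ δ^0`. -/
theorem stmt13 {d₁ d₂ : ℕ} (η₁ : Fin d₁ → (Fin d₁ → ℤ)) (η₂ : Fin d₂ → (Fin d₂ → ℤ))
    (hlin₁ : LinearIndependent ℚ fun i => fun j => (η₁ i j : ℚ))
    (hlin₂ : LinearIndependent ℚ fun i => fun j => (η₂ i j : ℚ))
    (L : (Fin d₁ → ℤ) →+ (Fin d₂ → ℤ))
    (hcone : ∀ i, ∃ c : Fin d₂ → ℚ, (∀ j, 0 ≤ c j) ∧
      ∀ k, ((L (η₁ i)) k : ℚ) = ∑ j, c j * (η₂ j k : ℚ))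
    (hdual : ∀ m : Fin d₂ → ℚ,
      (∀ s ∈ AddSubmonoid.closure (Set.range η₂),
        ∃ k : ℕ, ∑ j, m j * (s j : ℚ) = (k : ℚ)) →
      ∀ s ∈ AddSubmonoid.closure (Set.range η₁),
        ∃ k : ℕ, ∑ j, m j * ((L s) j : ℚ) = (k : ℚ)) :
    ∀ x ∈ AddSubmonoid.closure (Set.range η₁),
      L x ∈ AddSubmonoid.closure (Set.range η₂) :=
  stmt13_general η₁ η₂ hlin₂ L hdual
end

section
/- Let σ be a full-dimensional simplicial rational cone in N_ℝ with free-net σ^0, and let F = { m ∈ M ⊗ ℚ : ⟨m, n⟩ ∈ ℤ_{≥0} for all n ∈ σ^0 }. Then the quotient group F^{gp} / (σ^∨ ∩ M)^{gp} is a finite abelian group. -/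
open Matrix


/-- With `σ` a full-dimensional simplicial cone with free-net
`σ^0` generated by the linearly independent `η i`, `P = σ^∨ ∩ M` and
`F = { m ∈ M ⊗ ℚ : ⟨m, n⟩ ∈ ℤ_{≥0} ∀ n ∈ σ^0 }`, the quotient group
`F^{gp} / P^{gp}` (Grothendieck groups, taken as subgroups of `M ⊗ ℚ`)
is finite. -/

theorem stmt14 {d : ℕ} (η : Fin d → (Fin d → ℤ))
    (hlin : LinearIndependent ℚ fun i => fun j => (η i j : ℚ))
    (F P : AddSubmonoid (Fin d → ℚ))
    (hF : ∀ h : Fin d → ℚ, h ∈ F ↔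
      ∀ s ∈ AddSubmonoid.closure (Set.range η),
        ∃ k : ℕ, ∑ j, h j * (s j : ℚ) = (k : ℚ))
    (hP : ∀ h : Fin d → ℚ, h ∈ P ↔
      ((∃ m : Fin d → ℤ, ∀ j, h j = (m j : ℚ)) ∧ ∀ i, 0 ≤ ∑ j, h j * (η i j : ℚ))) :
    Finite ((AddSubgroup.closure (F : Set (Fin d → ℚ))) ⧸
      ((AddSubgroup.closure (P : Set (Fin d → ℚ))).addSubgroupOf
        (AddSubgroup.closure (F : Set (Fin d → ℚ))))) := by
  classical
  set AZ : Matrix (Fin d) (Fin d) ℤ := Matrix.of η with hAZ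
  set A : Matrix (Fin d) (Fin d) ℚ := AZ.map (Int.cast) with hAdef
  have hAη : ∀ i j, A i j = (η i j : ℚ) := fun i j => rfl
  have hAunit : IsUnit A := by
    rw [← Matrix.linearIndependent_rows_iff_isUnit]
    exact hlin
  have hdet : A.det ≠ 0 := by
    intro h
    exact (by simpa [h] using hAunit.map Matrix.detMonoidHom : IsUnit (0:ℚ)).ne_zero rfl
  have hdetcast : A.det = ((AZ.det : ℤ) : ℚ) := by
    have := RingHom.map_det (Int.castRingHom ℚ) AZ
    rw [hAdef]
    simpa using this.symm
  set D : ℤ := AZ.det with hD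
  have hDne : D ≠ 0 := by
    intro h; rw [hdetcast, h] at hdet; exact hdet (by norm_num)
  set n : ℕ := D.natAbs with hn
  have hnne : n ≠ 0 := Int.natAbs_ne_zero.mpr hDne
  haveI : NeZero n := ⟨hnne⟩
  set ε : ℤ := if 0 < D then 1 else -1 with hε
  have hεD : ε * D = (n : ℤ) := by
    have hDn : (n : ℤ) = |D| := (Int.abs_eq_natAbs D).symm
    rw [hDn, hε]
    split_ifs with h
    · rw [one_mul, abs_of_pos h]
    · rw [abs_of_neg (lt_of_le_of_ne (not_lt.mp h) hDne)]
      ring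
  set GF := AddSubgroup.closure (F : Set (Fin d → ℚ)) with hGF
  set GP := AddSubgroup.closure (P : Set (Fin d → ℚ)) with hGP
  -- the subgroup of vectors with integral pairings against all η i
  set L : AddSubgroup (Fin d → ℚ) :=
    { carrier := {h | ∀ i, ∃ z : ℤ, ∑ j, h j * (η i j : ℚ) = (z : ℚ)}
      zero_mem' := fun i => ⟨0, by simp⟩
      add_mem' := by
        rintro a b ha hb i
        obtain ⟨z1, hz1⟩ := ha i
        obtain ⟨z2, hz2⟩ := hb i
        refine ⟨z1 + z2, ?_⟩
        push_cast
        rw [← hz1, ← hz2, ← Finset.sum_add_distrib]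
        refine Finset.sum_congr rfl fun j _ => ?_
        simp only [Pi.add_apply]
        ring
      neg_mem' := by
        rintro a ha i
        obtain ⟨z, hz⟩ := ha i
        refine ⟨-z, ?_⟩
        push_cast
        rw [← hz, ← Finset.sum_neg_distrib]
        refine Finset.sum_congr rfl fun j _ => ?_
        simp only [Pi.neg_apply]
        ring } with hL
  have hFL : GF ≤ L := by
    rw [hGF, AddSubgroup.closure_le]
    intro h hh i
    obtain ⟨k, hk⟩ := (hF h).mp hh (η i)
      (AddSubmonoid.subset_closure (Set.mem_range_self i))
    exact ⟨(k : ℤ), by exact_mod_cast hk⟩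
  -- Key: n • h is integral for h in GF
  have hkey : ∀ h ∈ GF, ∃ m : Fin d → ℤ, ∀ j, (n : ℚ) * h j = (m j : ℚ) := by
    intro h hh
    have hhL := hFL hh
    choose c hc using hhL
    have hmv : A.mulVec h = fun i => (c i : ℚ) := by
      funext i
      rw [Matrix.mulVec, dotProduct, ← hc i]
      exact Finset.sum_congr rfl fun j _ => mul_comm _ _
    have h1 : (A.adjugate * A).mulVec h = A.det • h := by
      rw [Matrix.adjugate_mul, Matrix.smul_mulVec, Matrix.one_mulVec]
    rw [← Matrix.mulVec_mulVec, hmv] at h1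
    have hadj : A.adjugate = AZ.adjugate.map (Int.cast) := by
      have h4 := RingHom.map_adjugate (Int.castRingHom ℚ) AZ
      rw [hAdef]
      simpa [RingHom.mapMatrix_apply] using h4.symm
    refine ⟨fun j => ε * (AZ.adjugate.mulVec c) j, fun j => ?_⟩
    have h2 : A.det * h j = ((AZ.adjugate.mulVec c) j : ℚ) := by
      have h3 := congrFun h1 j
      rw [Pi.smul_apply, smul_eq_mul] at h3
      rw [← h3, hadj, Matrix.mulVec, dotProduct, Matrix.mulVec, dotProduct]
      push_cast
      rfl
    have : (n : ℚ) = (ε : ℚ) * A.det := by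
      rw [hdetcast]
      exact_mod_cast hεD.symm
    rw [this]
    push_cast
    rw [mul_assoc, h2]
  -- GP contains every integer vector
  set pZ : Fin d → ℤ := fun j => ε * (AZ.adjugate.mulVec 1) j with hpZ
  have hpair : ∀ i, ∑ j, (pZ j : ℚ) * (η i j : ℚ) = (n : ℚ) := by
    intro i
    have h1 : AZ.mulVec pZ = fun _ => (n : ℤ) := by
      funext i
      have hpZ' : pZ = ε • (AZ.adjugate.mulVec 1) := by
        funext j
        simp [hpZ]
      have : AZ.mulVec pZ = ε • (AZ * AZ.adjugate).mulVec 1 := by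
        rw [hpZ', Matrix.mulVec_smul, Matrix.mulVec_mulVec]
      rw [this, Matrix.mul_adjugate, Matrix.smul_mulVec, Matrix.one_mulVec]
      simp [← hD, ← hεD, mul_comm]
    have h2 := congrFun h1 i
    rw [Matrix.mulVec, dotProduct] at h2
    have : ∑ j, (pZ j : ℚ) * (η i j : ℚ) = ((∑ j, AZ i j * pZ j : ℤ) : ℚ) := by
      push_cast
      exact Finset.sum_congr rfl fun j _ => mul_comm _ _
    rw [this, h2]
    norm_cast
  have hZP : ∀ m : Fin d → ℤ, (fun j => (m j : ℚ)) ∈ GP := by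
    intro m
    set k : ℕ := Finset.univ.sup fun i => (∑ j, m j * η i j).natAbs with hk
    have hmem1 : (fun j => ((m j + k * pZ j : ℤ) : ℚ)) ∈ P := by
      rw [hP]
      refine ⟨⟨fun j => m j + k * pZ j, fun j => rfl⟩, fun i => ?_⟩
      have : ∑ j, ((m j + k * pZ j : ℤ) : ℚ) * (η i j : ℚ)
          = ((∑ j, m j * η i j : ℤ) : ℚ) + (k : ℚ) * (n : ℚ) := by
        push_cast
        rw [← hpair i, Finset.mul_sum, ← Finset.sum_add_distrib]
        exact Finset.sum_congr rfl fun j _ => by push_cast; ring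
      rw [this]
      have hk1 : ((∑ j, m j * η i j).natAbs : ℤ) ≤ (k : ℤ) := by
        have : (∑ j, m j * η i j).natAbs ≤ k :=
          Finset.le_sup (f := fun i => (∑ j, m j * η i j).natAbs) (Finset.mem_univ i)
        exact_mod_cast this
      have habs : -(k : ℤ) ≤ ∑ j, m j * η i j := by
        have h5 := neg_abs_le (∑ j, m j * η i j)
        rw [Int.abs_eq_natAbs] at h5
        omega
      have hn1 : 1 ≤ (n : ℤ) := by omega
      have : (0 : ℤ) ≤ (∑ j, m j * η i j) + (k : ℤ) * (n : ℤ) := by nlinarith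
      exact_mod_cast this
    have hmem2 : (fun j => ((k * pZ j : ℤ) : ℚ)) ∈ P := by
      rw [hP]
      refine ⟨⟨fun j => k * pZ j, fun j => rfl⟩, fun i => ?_⟩
      have : ∑ j, ((k * pZ j : ℤ) : ℚ) * (η i j : ℚ) = (k : ℚ) * (n : ℚ) := by
        push_cast
        rw [← hpair i, Finset.mul_sum]
        exact Finset.sum_congr rfl fun j _ => by ring
      rw [this]; positivity
    have : (fun j => (m j : ℚ))
        = (fun j => ((m j + k * pZ j : ℤ) : ℚ)) - (fun j => ((k * pZ j : ℤ) : ℚ)) := by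
      funext j; push_cast; simp
    rw [this]
    exact AddSubgroup.sub_mem _ (AddSubgroup.subset_closure hmem1)
      (AddSubgroup.subset_closure hmem2)
  -- GP consists only of integer vectors
  have hPZ : ∀ h ∈ GP, ∀ j, ∃ z : ℤ, h j = (z : ℚ) := by
    have : GP ≤
      { carrier := {h : Fin d → ℚ | ∀ j, ∃ z : ℤ, h j = (z : ℚ)}
        zero_mem' := fun j => ⟨0, by simp⟩
        add_mem' := by
          rintro a b ha hb j
          obtain ⟨z1, h1⟩ := ha j; obtain ⟨z2, h2⟩ := hb j
          exact ⟨z1 + z2, by push_cast [Pi.add_apply, h1, h2]; ring⟩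
        neg_mem' := by
          rintro a ha j
          obtain ⟨z, h1⟩ := ha j
          exact ⟨-z, by push_cast [Pi.neg_apply, h1]; ring⟩ } := by
      rw [hGP, AddSubgroup.closure_le]
      intro h hh
      obtain ⟨⟨m, hm⟩, -⟩ := (hP h).mp hh
      exact fun j => ⟨m j, hm j⟩
    exact this
  -- the homomorphism to (ZMod n)^d
  have hkey' : ∀ x : GF, ∃ m : Fin d → ℤ, ∀ j, (n : ℚ) * (x : Fin d → ℚ) j = (m j : ℚ) :=
    fun x => hkey x x.2
  choose mv hmv using hkey'
  have hcast : Function.Injective (Int.cast : ℤ → ℚ) := Int.cast_injective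
  set φ : GF →+ (Fin d → ZMod n) := AddMonoidHom.mk'
    (fun x => fun j => ((mv x j : ℤ) : ZMod n))
    (by
      intro a b
      funext j
      have : mv (a + b) j = mv a j + mv b j := by
        apply hcast
        push_cast
        rw [← hmv a j, ← hmv b j, ← hmv (a + b) j]
        have : ((a + b : GF) : Fin d → ℚ) j = (a : Fin d → ℚ) j + (b : Fin d → ℚ) j := rfl
        rw [this]
        ring
      show ((mv (a + b) j : ℤ) : ZMod n) = ((mv a j : ℤ) : ZMod n) + ((mv b j : ℤ) : ZMod n)
      rw [this]
      push_cast
      ring) with hφ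
  have hker : GP.addSubgroupOf GF = φ.ker := by
    ext x
    simp only [AddSubgroup.mem_addSubgroupOf, AddMonoidHom.mem_ker, hφ, AddMonoidHom.mk'_apply]
    constructor
    · intro hx
      funext j
      obtain ⟨z, hz⟩ := hPZ _ hx j
      have : mv x j = n * z := by
        apply hcast
        push_cast
        rw [← hmv x j, hz]
      rw [this]
      push_cast
      simp
    · intro hx
      have : ∀ j, ∃ z : ℤ, mv x j = n * z := by
        intro j
        have := congrFun hx j
        rw [Pi.zero_apply, ZMod.intCast_zmod_eq_zero_iff_dvd] at this
        exact this
      choose z hz using this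
      have hxz : (x : Fin d → ℚ) = fun j => (z j : ℚ) := by
        funext j
        have h1 := hmv x j
        rw [hz j] at h1
        push_cast at h1
        have hn0 : (n : ℚ) ≠ 0 := Nat.cast_ne_zero.mpr hnne
        exact mul_left_cancel₀ hn0 h1
      rw [hxz]
      exact hZP z
  rw [hker]
  exact Finite.of_equiv _ (QuotientAddGroup.quotientKerEquivRange φ).toEquiv.symm
end

section
/- Let P be a toric sharp monoid (fine, saturated, torsion-free, sharp) such that there exists a submonoid Q ⊆ P generated by d = rank(P^{gp}) elements with Q close to P. Then Q is a free commutative monoid of rank d. -/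
/-!
Every element of `P`, hence (as `P` generates `ℤ^d`) every element of `ℤ^d`, has a nonzero
multiple in the `ℤ`-span of the `d` generators of `Q`. So that span has rank `d`, the generators
are `ℤ`-linearly independent, and they form an `ℕ`-basis of the monoid `Q` they generate.
-/

open Module Submodule
open scoped nonZeroDivisors

section

variable {R M : Type*} [CommRing R] [AddCommGroup M] [Module R M]

theorem Submodule.isTorsion_quotient_of_span_eq_top {N : Submodule R M} {s : Set M}
    (hs : span R s = ⊤) (h : ∀ x ∈ s, ∃ a ∈ R⁰, a • x ∈ N) : IsTorsion R (M ⧸ N) := by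
  have hle : span R s ≤ (torsion R (M ⧸ N)).comap N.mkQ := by
    refine span_le.mpr fun x hx => ?_
    obtain ⟨a, ha, hax⟩ := h x hx
    exact (mem_torsion_iff _).mpr ⟨⟨a, ha⟩, (Quotient.mk_eq_zero N).mpr hax⟩
  rintro ⟨x⟩
  exact (mem_torsion_iff _).mp (hle (hs ▸ mem_top : x ∈ span R s))

theorem linearIndependent_of_isTorsion_quotient_span [IsDomain R] [Module.Finite R M]
    {ι : Type*} [Fintype ι] {v : ι → M} (hcard : Fintype.card ι = finrank R M)
    (htors : IsTorsion R (M ⧸ span R (Set.range v))) : LinearIndependent R v := by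
  rw [linearIndependent_iff_card_le_finrank_span]
  have := (span R (Set.range v)).finrank_quotient_add_finrank
  rw [htors.finrank_eq_zero] at this
  exact (hcard.trans this.symm).le.trans (by simp [Set.finrank])

end

noncomputable def LinearIndependent.closureRangeAddEquiv {ι M : Type*} [Finite ι] [AddCommGroup M]
    {v : ι → M} (hv : LinearIndependent ℤ v) : AddSubmonoid.closure (Set.range v) ≃+ (ι → ℕ) :=
  (AddEquiv.addSubmonoidCongr (span_nat_eq_addSubmonoidClosure _)).symm.trans
    (Basis.span (hv.restrict_scalars' ℕ)).equivFun.toAddEquiv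

theorem stmt15_general {d : ℕ} (P : AddSubmonoid (Fin d → ℤ))
    (hrank : AddSubgroup.closure (P : Set (Fin d → ℤ)) = ⊤)
    (f : Fin d → (Fin d → ℤ))
    (Q : AddSubmonoid (Fin d → ℤ)) (hQ : Q = AddSubmonoid.closure (Set.range f))
    (hclose : ∀ p ∈ P, ∃ n : ℕ, 0 < n ∧ n • p ∈ Q) :
    Nonempty (Q ≃+ (Fin d → ℕ)) := by
  subst hQ
  have hspan : span ℤ (P : Set (Fin d → ℤ)) = ⊤ := by
    rw [← toAddSubgroup_inj, span_int_eq_addSubgroupClosure, hrank]; rfl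
  have htors : IsTorsion ℤ ((Fin d → ℤ) ⧸ span ℤ (Set.range f)) := by
    refine isTorsion_quotient_of_span_eq_top hspan fun p hp => ?_
    obtain ⟨n, hn, hnp⟩ := hclose p hp
    refine ⟨n, mem_nonZeroDivisors_of_ne_zero (by omega), ?_⟩
    rw [natCast_zsmul]
    exact AddSubmonoid.closure_le.mpr subset_span hnp
  exact ⟨(linearIndependent_of_isTorsion_quotient_span (by simp) htors).closureRangeAddEquiv⟩

/-- Let `P` be a toric sharp monoid of rank `d` (realized via
its canonical embedding as a finitely generated, sharp, saturated submonoid of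
`ℤ^d` generating `ℤ^d` as a group), and let `Q ⊆ P` be a submonoid generated
by `d` elements that is close to `P`. Then `Q` is a free commutative monoid of
rank `d` (isomorphic to `ℕ^d`). -/
theorem stmt15 {d : ℕ} (P : AddSubmonoid (Fin d → ℤ))
    (hsharp : ∀ p ∈ P, -p ∈ P → p = 0)
    (hfg : P.FG)
    (hsat : ∀ x ∈ AddSubgroup.closure (P : Set (Fin d → ℤ)),
      ∀ n : ℕ, 0 < n → n • x ∈ P → x ∈ P)
    (hrank : AddSubgroup.closure (P : Set (Fin d → ℤ)) = ⊤)
    (f : Fin d → (Fin d → ℤ)) (hfP : ∀ i, f i ∈ P)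
    (Q : AddSubmonoid (Fin d → ℤ)) (hQ : Q = AddSubmonoid.closure (Set.range f))
    (hclose : ∀ p ∈ P, ∃ n : ℕ, 0 < n ∧ n • p ∈ Q) :
    Nonempty (Q ≃+ (Fin d → ℕ)) :=
  stmt15_general P hrank f Q hQ hclose
end

section
/- Let P be a simplicially toric sharp monoid with minimal free resolution i : P → F ≅ ℕ^d, regarded via the canonical embedding as inclusions P ⊆ F ⊆ P^{gp} ⊗ ℚ. Then for any injective homomorphism j : P → G with G ≅ ℕ^d and j(P) close to G, letting α : G → P^{gp} ⊗ ℚ be the unique extension of the inclusion P ⊆ P^{gp} ⊗ ℚ along j, one has F ⊆ α(G). -/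
/-- Let `P ⊆ F ⊆ P^{gp} ⊗ ℚ ≅ ℚ^d` be the minimal free
resolution of a simplicially toric sharp monoid `P` regarded as inclusions
(`F ≅ ℕ^d`, `P` close to `F`, and `F` initial among free resolutions — here
the target `G ≅ ℕ^d` is identified with `ℕ^d`). For any injective
`j : P → ℕ^d` with image close, if `α : ℕ^d → P^{gp} ⊗ ℚ` is the (unique)
extension of the inclusion `P ⊆ ℚ^d` along `j` (`α ∘ j = incl`), then
`F ⊆ α(ℕ^d)`. -/
theorem stmt16 {d : ℕ} (P F : AddSubmonoid (Fin d → ℚ)) (hPF : P ≤ F)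
    (eF : F ≃+ (Fin d → ℕ))
    (hcloseF : ∀ x ∈ F, ∃ n : ℕ, 0 < n ∧ n • x ∈ P)
    (hmin : ∀ j : P →+ (Fin d → ℕ), Function.Injective j →
      (∀ g : Fin d → ℕ, ∃ n : ℕ, 0 < n ∧ ∃ p : P, n • g = j p) →
      ∃! φ : F →+ (Fin d → ℕ), ∀ p : P, φ (AddSubmonoid.inclusion hPF p) = j p)
    (j : P →+ (Fin d → ℕ)) (hj : Function.Injective j)
    (hcloseG : ∀ g : Fin d → ℕ, ∃ n : ℕ, 0 < n ∧ ∃ p : P, n • g = j p)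
    (α : (Fin d → ℕ) →+ (Fin d → ℚ)) (hα : ∀ p : P, α (j p) = (p : Fin d → ℚ)) :
    (F : Set (Fin d → ℚ)) ⊆ Set.range α := by
  obtain ⟨φ, hφ, -⟩ := hmin j hj hcloseG
  intro x hx
  refine ⟨φ ⟨x, hx⟩, ?_⟩
  obtain ⟨n, hn, hnx⟩ := hcloseF x hx
  have key : n • α (φ ⟨x, hx⟩) = n • x := by
    have h1 : (⟨n • x, hPF hnx⟩ : F) = n • (⟨x, hx⟩ : F) := rfl
    have h2 : AddSubmonoid.inclusion hPF (⟨n • x, hnx⟩ : P) = (⟨n • x, hPF hnx⟩ : F) := rfl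
    calc n • α (φ ⟨x, hx⟩) = α (φ (n • ⟨x, hx⟩)) := by
          rw [map_nsmul, map_nsmul]
      _ = α (j ⟨n • x, hnx⟩) := by rw [← h1, ← h2, hφ]
      _ = ((⟨n • x, hnx⟩ : P) : Fin d → ℚ) := hα _
      _ = n • x := rfl
  have := smul_right_injective (Fin d → ℚ) (Nat.cast_ne_zero.mpr hn.ne' : (n : ℚ) ≠ 0)
  have h := key
  rw [← Nat.cast_smul_eq_nsmul ℚ, ← Nat.cast_smul_eq_nsmul ℚ n x] at h
  exact this h
end
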